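/- Let Σ be a finite alphabet disjoint from {a, b, a', b'}, let f, g : Σ* → {a,b}* be non-erasing monoid morphisms, and let ψ₂ : {a,b}* → {a,b,a',b'}* be the monoid morphism with ψ₂(a) = aa' and ψ₂(b) = bb'. If there exists a non-empty word w ∈ Σ⁺ with f(w) = g(w), then the language L_{(f,g)} = { w · ψ₂(f(w)) : w ∈ Σ⁺, f(w) = g(w) } over the alphabet Σ ∪ {a,b,a',b'} is not regular. -/

import Mathlib

/-! Repetitive (non)deterministic finite automata with translucent words. -/

/-- Behavior of the automaton at the end-of-tape marker: halt accepting,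
halt rejecting, or (in the repetitive case) continue in one of a set of states. -/
inductive EndBehavior (Q : Type) : Type where
  | accept : EndBehavior Q
  | reject : EndBehavior Q
  | cont : Set Q → EndBehavior Q

/-- `InStar S w` means `w` belongs to the Kleene star `S*` of the set of words `S`. -/
def InStar {α : Type} (S : Set (List α)) (w : List α) : Prop :=
  ∃ l : List (List α), (∀ u ∈ l, u ∈ S) ∧ l.flatten = w

/-- A (repetitive) nondeterministic finite automaton with translucent words,
with state set `Q` over the alphabet `α`.  `tl q` is the set `τ(q)` of
translucent words of the state `q`, `delta` is the transition function and
`endB q` is the behavior at the end-of-tape marker.  The fields `tl_fin`,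
`code_ne`, `prefix_code` and `tl_head` express that each `τ(q)` is finite,
that `τ(q) ∪ Σ_q` is a prefix code (no empty word, and no member is a proper
prefix of another member), and that no word of `τ(q)` begins with a letter
readable in `q`. -/
structure RNFAwtw (α : Type) (Q : Type) : Type where
  init : Set Q
  tl : Q → Set (List α)
  delta : Q → α → Set Q
  endB : Q → EndBehavior Q
  tl_fin : ∀ q, (tl q).Finite
  code_ne : ∀ q, [] ∉ tl q
  prefix_code : ∀ q,
    ∀ u ∈ tl q ∪ {w | ∃ a, (delta q a).Nonempty ∧ w = [a]},
    ∀ v ∈ tl q ∪ {w | ∃ a, (delta q a).Nonempty ∧ w = [a]},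
      u <+: v → u = v
  tl_head : ∀ q, ∀ t ∈ tl q, ∀ a, (delta q a).Nonempty → ¬ [a] <+: t

/-- Configurations: a pair of a state and the remaining tape content, or one
of the two halting configurations. -/
inductive Conf (α Q : Type) : Type where
  | state : Q → List α → Conf α Q
  | accept : Conf α Q
  | reject : Conf α Q

/-- The single-step computation relation of an RNFAwtw. -/
inductive RNFAwtw.Step {α Q : Type} (A : RNFAwtw α Q) :
    Conf α Q → Conf α Q → Prop where
  | read {q q' : Q} {a : α} {u v : List α} :
      InStar (A.tl q) u → q' ∈ A.delta q a →
      RNFAwtw.Step A (Conf.state q (u ++ a :: v)) (Conf.state q' (u ++ v))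
  | stuck {q : Q} {a : α} {u v : List α} :
      InStar (A.tl q) u → A.delta q a = ∅ →
      (∀ t ∈ A.tl q, ¬ t <+: (a :: v)) →
      RNFAwtw.Step A (Conf.state q (u ++ a :: v)) Conf.reject
  | haltAccept {q : Q} {w : List α} :
      InStar (A.tl q) w → A.endB q = EndBehavior.accept →
      RNFAwtw.Step A (Conf.state q w) Conf.accept
  | haltReject {q : Q} {w : List α} :
      InStar (A.tl q) w → A.endB q = EndBehavior.reject →
      RNFAwtw.Step A (Conf.state q w) Conf.reject
  | goOn {q q' : Q} {w : List α} {S : Set Q} :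
      InStar (A.tl q) w → A.endB q = EndBehavior.cont S → q' ∈ S →
      RNFAwtw.Step A (Conf.state q w) (Conf.state q' w)

/-- `A` accepts the word `w`. -/
def RNFAwtw.Accepts {α Q : Type} (A : RNFAwtw α Q) (w : List α) : Prop :=
  ∃ q0 ∈ A.init, Relation.ReflTransGen A.Step (Conf.state q0 w) Conf.accept

/-- The language accepted by `A`. -/
def RNFAwtw.lang {α Q : Type} (A : RNFAwtw α Q) : Set (List α) :=
  { w | A.Accepts w }

/-- `A` is deterministic: one initial state, at most one transition per
state/letter pair, and at the end-of-tape marker the continuation (if any)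
is a single state. -/
def RNFAwtw.Deterministic {α Q : Type} (A : RNFAwtw α Q) : Prop :=
  (∃ q0, A.init = {q0}) ∧
  (∀ q a, (A.delta q a).Subsingleton) ∧
  (∀ q S, A.endB q = EndBehavior.cont S → ∃ q', S = {q'})

/-- `A` is non-repetitive: at the end-of-tape marker it always halts. -/
def RNFAwtw.NonRepetitive {α Q : Type} (A : RNFAwtw α Q) : Prop :=
  ∀ q S, A.endB q ≠ EndBehavior.cont S

/-- `L` is accepted by some repetitive NFAwtw (with a finite state set). -/
def AcceptedByRNFAwtw {α : Type} (L : Set (List α)) : Prop :=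
  ∃ (Q : Type) (_ : Finite Q) (A : RNFAwtw α Q), A.lang = L

/-- `L` is accepted by some repetitive DFAwtw. -/
def AcceptedByRDFAwtw {α : Type} (L : Set (List α)) : Prop :=
  ∃ (Q : Type) (_ : Finite Q) (A : RNFAwtw α Q), A.Deterministic ∧ A.lang = L

/-- `L` is accepted by some (non-repetitive) NFAwtw. -/
def AcceptedByNFAwtw {α : Type} (L : Set (List α)) : Prop :=
  ∃ (Q : Type) (_ : Finite Q) (A : RNFAwtw α Q), A.NonRepetitive ∧ A.lang = L

/-- `L` is accepted by some (non-repetitive) DFAwtw. -/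
def AcceptedByDFAwtw {α : Type} (L : Set (List α)) : Prop :=
  ∃ (Q : Type) (_ : Finite Q) (A : RNFAwtw α Q),
    A.NonRepetitive ∧ A.Deterministic ∧ A.lang = L

/-- The two-letter alphabet `{a, b}`. -/
inductive Letter : Type where
  | a : Letter
  | b : Letter
deriving DecidableEq

instance : Fintype Letter :=
  ⟨{Letter.a, Letter.b}, fun x => by cases x <;> simp⟩

/-- The monoid morphism `Σ* → Δ*` induced by the images `h x` of the
letters `x ∈ Σ`. -/
def liftH {α β : Type} (h : α → List β) (w : List α) : List β :=
  (w.map h).flatten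

/-- The PCP instance given by the letter images `f` and `g` has a solution:
a non-empty word `w` with `f(w) = g(w)`. -/
def HasPCPSolution {Γ : Type} (f g : Γ → List Letter) : Prop :=
  ∃ w : List Γ, w ≠ [] ∧ liftH f w = liftH g w

/-- A language is regular if it is accepted by a deterministic finite
automaton with finitely many states. -/
def IsRegularLang {α : Type} (L : Set (List α)) : Prop :=
  ∃ (σ : Type) (_ : Fintype σ) (M : DFA α σ), M.accepts = L

/-- The morphism `ψ₂ : {a,b}* → {a,b,a',b'}*` with `ψ₂(a) = aa'` and
`ψ₂(b) = bb'`, where the alphabet `{a,b,a',b'}` is realized as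
`Letter ⊕ Letter` (`Sum.inl` = unprimed, `Sum.inr` = primed). -/
def psi2 (u : List Letter) : List (Letter ⊕ Letter) :=
  (u.map fun x => [Sum.inl x, Sum.inr x]).flatten

/-- The language `L_{(f,g)} = { w · ψ₂(f(w)) : w ∈ Σ⁺, f(w) = g(w) }` over
the alphabet `Σ ∪ {a,b,a',b'}`, realized as `Γ ⊕ (Letter ⊕ Letter)`. -/
def Lfg {Γ : Type} (f g : Γ → List Letter) :
    Set (List (Γ ⊕ (Letter ⊕ Letter))) :=
  { z | ∃ w : List Γ, w ≠ [] ∧ liftH f w = liftH g w ∧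
        z = w.map Sum.inl ++ (psi2 (liftH f w)).map Sum.inr }

section Aux

lemma length_flatten_replicate {β : Type} (n : ℕ) (s : List β) :
    (List.flatten (List.replicate n s)).length = n * s.length := by
  induction n with
  | zero => simp
  | succ k ih => simp [List.replicate_succ, ih]; ring

lemma liftH_append {α β : Type} (h : α → List β) (u v : List α) :
    liftH h (u ++ v) = liftH h u ++ liftH h v := by
  simp [liftH]

lemma liftH_flatten_replicate {α β : Type} (h : α → List β) (n : ℕ) (s : List α) :
    liftH h (List.flatten (List.replicate n s))
      = List.flatten (List.replicate n (liftH h s)) := by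
  induction n with
  | zero => simp [liftH]
  | succ k ih => simp [List.replicate_succ, liftH_append, ih]

lemma psi2_append (u v : List Letter) : psi2 (u ++ v) = psi2 u ++ psi2 v := by
  simp [psi2]

lemma psi2_flatten_replicate (n : ℕ) (s : List Letter) :
    psi2 (List.flatten (List.replicate n s))
      = List.flatten (List.replicate n (psi2 s)) := by
  induction n with
  | zero => simp [psi2]
  | succ k ih => simp [List.replicate_succ, psi2_append, ih]

lemma map_inl_append_map_inr_inj {A B : Type} :
    ∀ (l1 l2 : List A) (r1 r2 : List B),
    l1.map Sum.inl ++ r1.map Sum.inr = l2.map Sum.inl ++ r2.map Sum.inr →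
    l1 = l2 ∧ r1 = r2 := by
  intro l1
  induction l1 with
  | nil =>
    intro l2 r1 r2 h
    cases l2 with
    | nil =>
      refine ⟨rfl, ?_⟩
      simpa using List.map_injective_iff.mpr Sum.inr_injective (by simpa using h)
    | cons x xs =>
      cases r1 with
      | nil => simp at h
      | cons y ys => simp at h
  | cons a as ih =>
    intro l2 r1 r2 h
    cases l2 with
    | nil =>
      cases r2 with
      | nil => simp at h
      | cons y ys => simp at h
    | cons b bs =>
      simp only [List.map_cons, List.cons_append, List.cons.injEq] at h
      obtain ⟨hab, hrest⟩ := h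
      obtain ⟨h1, h2⟩ := ih bs r1 r2 hrest
      exact ⟨by rw [Sum.inl.injEq] at hab; rw [hab, h1], h2⟩

end Aux

/-- If a PCP instance given by non-erasing morphisms `f, g : Σ* → {a,b}*`
has a solution, then the language `L_{(f,g)} = { w·ψ₂(f(w)) : w ∈ Σ⁺,
f(w) = g(w) }` is not regular. -/

theorem Lfg_not_regular {Γ : Type} [Finite Γ] (f g : Γ → List Letter)
    (hf : ∀ x, f x ≠ []) (hg : ∀ x, g x ≠ [])
    (hsol : HasPCPSolution f g) :
    ¬ IsRegularLang (Lfg f g) := by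
  obtain ⟨s, hs_ne, hs_eq⟩ := hsol
  -- basic positivity facts
  have hfs_ne : liftH f s ≠ [] := by
    cases s with
    | nil => exact absurd rfl hs_ne
    | cons x xs =>
      simp only [liftH, List.map_cons, List.flatten_cons, ne_eq, List.append_eq_nil_iff]
      intro ⟨h1, _⟩; exact hf x h1
  have hps_pos : 0 < (psi2 (liftH f s)).length := by
    have : (psi2 (liftH f s)).length = 2 * (liftH f s).length := by
      simp [psi2, List.length_flatten, List.map_map, Function.comp]
      induction (liftH f s) with
      | nil => simp
      | cons y ys ih => simp [ih]; ring
    rw [this]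
    have := List.length_pos_iff.mpr hfs_ne
    omega
  have hs_pos : 0 < s.length := List.length_pos_iff.mpr hs_ne
  -- the powers
  set wn : ℕ → List (Γ ⊕ (Letter ⊕ Letter)) :=
    fun n => (List.flatten (List.replicate n s)).map Sum.inl with hwn
  set pn : ℕ → List (Γ ⊕ (Letter ⊕ Letter)) :=
    fun n => (List.flatten (List.replicate n (psi2 (liftH f s)))).map Sum.inr with hpn
  -- membership characterization
  have mem_iff : ∀ n m : ℕ, 0 < n → (wn n ++ pn m ∈ Lfg f g ↔ n = m) := by
    intro n m hn
    constructor
    · rintro ⟨v, hv_ne, hv_eq, hz⟩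
      have hsplit := map_inl_append_map_inr_inj v (List.flatten (List.replicate n s))
        (psi2 (liftH f v)) (List.flatten (List.replicate m (psi2 (liftH f s)))) hz.symm
      obtain ⟨hv, hp⟩ := hsplit
      rw [hv, liftH_flatten_replicate, psi2_flatten_replicate] at hp
      have hlen := congrArg List.length hp
      rw [length_flatten_replicate, length_flatten_replicate] at hlen
      exact Nat.eq_of_mul_eq_mul_right hps_pos hlen
    · rintro rfl
      refine ⟨List.flatten (List.replicate n s), ?_, ?_, ?_⟩
      · intro h
        have := congrArg List.length h
        rw [length_flatten_replicate] at this
        simp only [List.length_nil] at this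
        have := Nat.mul_eq_zero.mp this
        omega
      · rw [liftH_flatten_replicate, liftH_flatten_replicate, hs_eq]
      · rw [liftH_flatten_replicate, psi2_flatten_replicate]
  -- now the DFA argument
  rintro ⟨σ, _, M, hM⟩
  obtain ⟨n, m, hnm, heq⟩ :=
    Finite.exists_ne_map_eq_of_infinite (fun n : ℕ => M.eval (wn (n + 1)))
  have hmem : wn (n + 1) ++ pn (n + 1) ∈ Lfg f g := (mem_iff _ _ (Nat.succ_pos n)).mpr rfl
  have hacc : wn (n + 1) ++ pn (n + 1) ∈ M.accepts := by rw [hM]; exact hmem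
  have hacc' : wn (m + 1) ++ pn (n + 1) ∈ M.accepts := by
    have h1 : M.eval (wn (m + 1) ++ pn (n + 1)) = M.eval (wn (n + 1) ++ pn (n + 1)) := by
      simp only [DFA.eval, DFA.evalFrom_of_append]
      exact congrArg (fun q => M.evalFrom q (pn (n + 1))) heq.symm
    show M.eval _ ∈ M.accept
    rw [h1]
    exact hacc
  have hmem' : wn (m + 1) ++ pn (n + 1) ∈ Lfg f g := by rw [← hM]; exact hacc'
  have : m + 1 = n + 1 := (mem_iff _ _ (Nat.succ_pos m)).mp hmem'
  omega
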